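/- arXiv:1701.04092 — 2 statements merged into one kernel-verified Lean document; each statement's English description precedes it below -/
import Mathlib

section
/- Let q be an odd prime power, P ∈ 𝔽_q[T] monic irreducible and ν ≥ 1. Then: (1) if χ_q(P) = −1, then #𝒜_q(P^ν) = |P|^ν·(1 − 1/(|P|+1)) + |P|/(|P|+1) when ν is odd, and #𝒜_q(P^ν) = |P|^ν·(1 − 1/(|P|+1)) + 1/(|P|+1) when ν is even; (2) if χ_q(P) = 0 (i.e. P = T), then #𝒜_q(P^ν) = (|P|^ν + 1)/2; (3) if χ_q(P) = 1, then #𝒜_q(P^ν) = |P|^ν. -/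
open Polynomial Filter

open scoped Classical

noncomputable section

variable (F : Type*) [Field F] [Fintype F]

/-- `f` is a sum of two squares in the function-field sense: `f = A² + T·B²`. -/
def IsSOS (f : F[X]) : Prop := ∃ A B : F[X], f = A ^ 2 + X * B ^ 2

/-- The indicator function `b_q` of sums of two squares. -/
def bq (f : F[X]) : ℝ := if IsSOS F f then 1 else 0

/-- `r_q(f)`: the number of representations `f = A² + T·B²`, counted up to sign. -/
def rq (f : F[X]) : ℝ :=
  (Nat.card {p : F[X] × F[X] // f = p.1 ^ 2 + X * p.2 ^ 2} : ℝ) / 2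

/-- Indicator of monic irreducible (prime) polynomials. -/
def primeInd (f : F[X]) : ℝ := if f.Monic ∧ Irreducible f then 1 else 0

/-- The `r`-divisor function: number of ordered factorizations into `r` monic factors. -/
def dr (r : ℕ) (f : F[X]) : ℝ :=
  (Nat.card {g : Fin r → F[X] // (∀ i, (g i).Monic) ∧ ∏ i, g i = f} : ℝ)

/-- The quadratic character modulo `T`. -/
def chiq (f : F[X]) : ℝ :=
  if f.eval 0 = 0 then 0 else if IsSquare (f.eval 0) then 1 else -1

/-- The norm `|P| = q^{deg P}`. -/
def absP (P : F[X]) : ℝ := (Fintype.card F : ℝ) ^ P.natDegree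

/-- `𝒜_q(g) = {A² + T·B² mod g}` inside `𝔽_q[T]/(g)`. -/
def Aset (g : F[X]) : Set (F[X] ⧸ Ideal.span {g}) :=
  {x | ∃ A B : F[X], x = Ideal.Quotient.mk (Ideal.span {g}) (A ^ 2 + X * B ^ 2)}

/-- `𝒜_{q,h}(g) = {f : f + hᵢ ∈ 𝒜_q(g) for all i}`. -/
def Ahset {k : ℕ} (h : Fin k → F[X]) (g : F[X]) : Set (F[X] ⧸ Ideal.span {g}) :=
  {x | ∀ i, x + Ideal.Quotient.mk (Ideal.span {g}) (h i) ∈ Aset F g}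

/-- `Ω_{q,h}(g)`: elements of `𝒜_{q,h}(g)` with `f + hᵢ ≡ 0` for some `i`. -/
def OmegaSet {k : ℕ} (h : Fin k → F[X]) (g : F[X]) : Set (F[X] ⧸ Ideal.span {g}) :=
  {x ∈ Ahset F h g | ∃ i, x + Ideal.Quotient.mk (Ideal.span {g}) (h i) = 0}

/-- `Ω*_{q,h}(g)`: elements of `𝒜_{q,h}(g)` with `f + hᵢ ≢ 0` for all `i`. -/
def OmegaStar {k : ℕ} (h : Fin k → F[X]) (g : F[X]) : Set (F[X] ⧸ Ideal.span {g}) :=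
  {x ∈ Ahset F h g | ∀ i, x + Ideal.Quotient.mk (Ideal.span {g}) (h i) ≠ 0}

/-- `δ_{q,h}(P) = lim_ν |P|^{-ν} #𝒜_{q,h}(P^ν)`; since the sequence is monotonically
decreasing and nonnegative, the limit equals the infimum. -/
def deltaP {k : ℕ} (h : Fin k → F[X]) (P : F[X]) : ℝ :=
  ⨅ ν : ℕ, (Nat.card ↥(Ahset F h (P ^ ν)) : ℝ) / absP F P ^ ν

/-- The singular series `𝔖_{q,h} = ∏_P δ_{q,h}(P)/δ_{q,0}(P)^k`. -/
def singSeries {k : ℕ} (h : Fin k → F[X]) : ℝ :=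
  ∏' P : {P : F[X] // P.Monic ∧ Irreducible P},
    deltaP F h P.1 / deltaP F (fun _ : Fin 1 => (0 : F[X])) P.1 ^ k

/-- `𝔖_h = 2^{k − #{h₁(0),…,h_k(0)}}`. -/
def Sfrak {k : ℕ} (h : Fin k → F[X]) : ℝ :=
  2 ^ (k - Set.ncard (Set.range fun i => (h i).eval 0))

/-- `𝔇_h = 1` iff every value `a ∈ 𝔽_q` is attained by an even number of the `hᵢ(0)`. -/
def Dfrak {k : ℕ} (h : Fin k → F[X]) : ℝ :=
  if ∀ a : F, Even (Nat.card {i : Fin k // (h i).eval 0 = a}) then 1 else 0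

/-- The average of `ψ` over all monic polynomials of degree `n`
(parametrized by their lower `n` coefficients). -/
def monicAvg (n : ℕ) (ψ : F[X] → ℝ) : ℝ :=
  (∑ a : Fin n → F, ψ (X ^ n + ∑ i : Fin n, C (a i) * X ^ (i : ℕ))) /
    (Fintype.card F : ℝ) ^ n

/-- The average of `ψ` over the short interval `{f : deg(f - f₀) < m}` around `f₀`,
parametrized by the `m` free lowest coefficients. -/
def intervalAvg (f0 : F[X]) (m : ℕ) (ψ : F[X] → ℝ) : ℝ :=
  (∑ a : Fin m → F, ψ (f0 + ∑ i : Fin m, C (a i) * X ^ (i : ℕ))) /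
    (Fintype.card F : ℝ) ^ m

end

/-!
Split `𝒜(P^ν)` according to whether a class is a unit modulo `P`. Since `2` is invertible,
Hensel's lemma shows that a unit is `A² + T·B²` modulo `P^ν` as soon as it is so modulo `P`,
so the units contribute `#(𝒜(P) \ {0}) · |P|^(ν-1)`. In the residue field `𝔽_q[T]/(P)` the
norm of `-T` is `P(0)`, so `-T` is a square there iff `χ_q(P) = 1`.

* `χ_q(P) = 1`: `-T ≡ β²` modulo `P^ν` with `β` a unit, and
  `x = ((x + 1)/2)² - ((x - 1)/2)²` shows that every class is represented.
* `χ_q(P) = -1`: `a² + T·b²` is anisotropic modulo `P`, so every unit modulo `P` is represented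
  and the non-units of `𝒜(P^(ν+2))` are exactly `P² · 𝒜(P^ν)`; this gives the recursion
  `#𝒜(P^(ν+2)) = (|P| - 1)|P|^(ν+1) + #𝒜(P^ν)`.
* `P = T`: the units are the lifts of the `(q - 1)/2` nonzero squares of `𝔽_q`, and the
  non-units of `𝒜(T^(ν+1))` are `T · 𝒜(T^ν)`.
-/

open Polynomial

section CommRing

variable {R : Type*} [CommRing R]

theorem exists_sq_lift_of_isCoprime {P w u β : R} (hβ : IsCoprime P (2 * w * β))
    (h : P ∣ w * β ^ 2 - u) (m : ℕ) :
    ∃ γ, P ∣ γ - β ∧ P ^ (m + 1) ∣ w * γ ^ 2 - u := by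
  induction m with
  | zero => exact ⟨β, by simp, by simpa using h⟩
  | succ m ih =>
    obtain ⟨γ, ⟨d, hd⟩, c, hc⟩ := ih
    have hγ : IsCoprime P (2 * w * γ) := by
      rw [show 2 * w * γ = 2 * w * β + P * (2 * w * d) by linear_combination 2 * w * hd]
      exact hβ.add_mul_left_right _
    obtain ⟨a, b, hab⟩ := hγ
    -- Newton step: `b` inverts `2wγ` modulo `P`.
    refine ⟨γ - b * c * P ^ (m + 1), ⟨d - b * c * P ^ m, by ring_nf; linear_combination hd⟩,
      a * c + w * (b * c) ^ 2 * P ^ m, ?_⟩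
    linear_combination hc - c * P ^ (m + 1) * hab

theorem exists_sq_add_mul_sq_eq_mk_of_isCoprime {P c β : R} (h2 : IsUnit (2 : R))
    (hβ : IsCoprime P β) (h : P ∣ β ^ 2 + c) (m : ℕ) (x : R ⧸ Ideal.span {P ^ m}) :
    ∃ a b, x = a ^ 2 + Ideal.Quotient.mk _ c * b ^ 2 := by
  obtain ⟨γ, ⟨d, hd⟩, hγ⟩ := exists_sq_lift_of_isCoprime (w := 1) (u := -c)
    (by simpa using (isCoprime_one_right.of_isCoprime_of_dvd_right h2.dvd).mul_right hβ)
    (by simpa using h) m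
  have hγ : IsCoprime (P ^ m) γ := by
    rw [show γ = β + P * d by linear_combination hd]
    exact (hβ.add_mul_left_right d).pow_left
  obtain ⟨u, v, huv⟩ := hγ
  obtain ⟨t, ht⟩ := h2.map (Ideal.Quotient.mk (Ideal.span {P ^ m})) |>.exists_right_inv
  have hc : Ideal.Quotient.mk (Ideal.span {P ^ m}) (γ ^ 2 + c) = 0 :=
    (Ideal.Quotient.eq_zero_iff_dvd _ _).2 ((pow_dvd_pow P m.le_succ).trans (by simpa using hγ))
  have hv : Ideal.Quotient.mk (Ideal.span {P ^ m}) (v * γ) = 1 := by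
    rw [← map_one (Ideal.Quotient.mk _), ← huv, map_add,
      (Ideal.Quotient.eq_zero_iff_dvd (P ^ m) (u * P ^ m)).2 (dvd_mul_left _ _), zero_add]
  simp only [map_add, map_mul, map_pow, map_ofNat] at hc hv ht
  -- `c = -γ²` with `γ` a unit, and `x = ((x + 1) / 2)² - ((x - 1) / 2)²`.
  refine ⟨t * (x + 1), Ideal.Quotient.mk _ v * t * (x - 1), ?_⟩
  linear_combination (-x * (1 + 2 * t)) * ht
    + t ^ 2 * (x - 1) ^ 2 * (1 + Ideal.Quotient.mk _ γ * Ideal.Quotient.mk _ v) * hv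
    - (Ideal.Quotient.mk _ v * t * (x - 1)) ^ 2 * hc

theorem exists_sq_add_mul_sq_dvd_sub [IsBezout R] {P c f a b : R} (hP : Irreducible P)
    (h2 : IsUnit (2 : R)) (hf : ¬P ∣ f) (h : P ∣ a ^ 2 + c * b ^ 2 - f) (m : ℕ) :
    ∃ A B, P ^ m ∣ A ^ 2 + c * B ^ 2 - f := by
  have h2P : IsCoprime P 2 := isCoprime_one_right.of_isCoprime_of_dvd_right h2.dvd
  have lift {w u β : R} (hβ : IsCoprime P (2 * w * β)) (h : P ∣ w * β ^ 2 - u) :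
      ∃ γ, P ^ m ∣ w * γ ^ 2 - u :=
    let ⟨γ, _, hγ⟩ := exists_sq_lift_of_isCoprime hβ h m
    ⟨γ, (pow_dvd_pow P m.le_succ).trans hγ⟩
  by_cases ha : P ∣ a
  · have hcb : IsCoprime P (c * b ^ 2) := hP.coprime_iff_not_dvd.2 fun hcb =>
      hf (by simpa using dvd_sub (dvd_add (dvd_pow ha two_ne_zero) hcb) h)
    obtain ⟨γ, hγ⟩ := lift (w := c) (u := f - a ^ 2)
      ((h2P.mul_right hcb.of_mul_right_left).mul_right
        ((IsCoprime.pow_right_iff two_pos).1 hcb.of_mul_right_right))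
      (by convert h using 1; ring)
    exact ⟨a, γ, by convert hγ using 1; ring⟩
  · obtain ⟨γ, hγ⟩ := lift (w := 1) (u := f - c * b ^ 2)
      (by simpa using h2P.mul_right (hP.coprime_iff_not_dvd.2 ha)) (by convert h using 1; ring)
    exact ⟨γ, b, by convert hγ using 1; ring⟩

end CommRing

theorem AddMonoidHom.card_preimage_of_surjective {A B : Type*} [AddGroup A] [AddGroup B]
    (φ : A →+ B) (hφ : Function.Surjective φ) (S : Set B) :
    Nat.card (φ ⁻¹' S) = Nat.card φ.ker * Nat.card S := by
  let e := QuotientAddGroup.quotientKerEquivOfSurjective φ hφ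
  rw [show φ ⁻¹' S = QuotientAddGroup.mk ⁻¹' (e ⁻¹' S) from rfl,
    Nat.card_congr (QuotientAddGroup.preimageMkEquivAddSubgroupProdSet _ _), Nat.card_prod,
    Nat.card_preimage_of_injective e.injective (by simp [e.surjective.range_eq])]

section QuotientPow

variable {R : Type*} [CommRing R] (P : R)

def quotPowToQuot (m : ℕ) [NeZero m] : R ⧸ Ideal.span {P ^ m} →+* R ⧸ Ideal.span {P} :=
  Ideal.Quotient.factor (Ideal.span_singleton_le_span_singleton.2 (dvd_pow_self P (NeZero.ne m)))

@[simp]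
theorem quotPowToQuot_mk (m : ℕ) [NeZero m] (f : R) :
    quotPowToQuot P m (Ideal.Quotient.mk _ f) = Ideal.Quotient.mk _ f :=
  Ideal.Quotient.factor_mk _ _

theorem quotPowToQuot_surjective (m : ℕ) [NeZero m] : Function.Surjective (quotPowToQuot P m) :=
  Ideal.Quotient.factor_surjective _

def quotMulPow (k n : ℕ) : R ⧸ Ideal.span {P ^ n} →ₗ[R] R ⧸ Ideal.span {P ^ (n + k)} :=
  Submodule.mapQ _ _ (LinearMap.mulLeft R (P ^ k)) <| Ideal.span_le.2 <| by
    rintro _ rfl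
    exact Ideal.mem_span_singleton.2 ⟨1, by simp [pow_add, mul_comm]⟩

@[simp]
theorem quotMulPow_mk (k n : ℕ) (f : R) :
    quotMulPow P k n (Ideal.Quotient.mk _ f) = Ideal.Quotient.mk _ (P ^ k * f) :=
  rfl

theorem quotMulPow_injective [IsDomain R] {P : R} (hP : P ≠ 0) (k n : ℕ) :
    Function.Injective (quotMulPow P k n) := by
  rw [← LinearMap.ker_eq_bot, LinearMap.ker_eq_bot']
  intro x hx
  obtain ⟨f, rfl⟩ := Ideal.Quotient.mk_surjective x
  rw [quotMulPow_mk, Ideal.Quotient.eq_zero_iff_dvd, pow_add, mul_comm (P ^ n)] at hx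
  exact (Ideal.Quotient.eq_zero_iff_dvd _ _).2 ((mul_dvd_mul_iff_left (pow_ne_zero k hP)).1 hx)

end QuotientPow

theorem eq_zero_of_sq_add_mul_sq_eq_zero {K : Type*} [Field K] {c a b : K} (hc : ¬IsSquare (-c))
    (h : a ^ 2 + c * b ^ 2 = 0) : a = 0 ∧ b = 0 := by
  obtain rfl : b = 0 := by
    by_contra hb
    exact hc ⟨a / b, by field_simp; linear_combination -h⟩
  simpa using h

namespace FiniteField

theorem isSquare_norm_iff {K L : Type*} [Field K] [Field L] [Algebra K L] [Finite L]
    (hK : ringChar K ≠ 2) (x : L) : IsSquare (Algebra.norm K x) ↔ IsSquare x := by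
  have := Fintype.ofFinite L
  have := Finite.of_injective _ (algebraMap K L).injective
  have := Fintype.ofFinite K
  rcases eq_or_ne x 0 with rfl | hx
  · simp
  have hL : ringChar L ≠ 2 := Algebra.ringChar_eq K L ▸ hK
  rw [isSquare_iff hK (Algebra.norm_ne_zero_iff.2 hx), isSquare_iff hL hx,
    ← (algebraMap K L).injective.eq_iff, map_pow, map_one, algebraMap_norm_eq_pow, ← pow_mul,
    Fintype.card_eq_nat_card, Fintype.card_eq_nat_card]
  -- `N x = x ^ ((|L| - 1) / (|K| - 1))` and `(|L| - 1) / (|K| - 1) * (|K| / 2) = |L| / 2`.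
  obtain ⟨s, hs⟩ : Nat.card K - 1 ∣ Nat.card L - 1 := by
    rw [Module.natCard_eq_pow_finrank (K := K) (V := L)]
    exact Nat.sub_one_dvd_pow_sub_one _ _
  have hKodd : Nat.card K % 2 = 1 :=
    Fintype.card_eq_nat_card (α := K) ▸ odd_card_of_char_ne_two hK
  have hK1 : 1 < Nat.card K := Finite.one_lt_card
  have hL1 : 1 ≤ Nat.card L := Nat.card_pos
  obtain ⟨k, hk⟩ : ∃ k, Nat.card K = 2 * k + 1 := ⟨Nat.card K / 2, by omega⟩
  rw [hk, Nat.add_sub_cancel] at hs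
  have hLs : Nat.card L = 2 * (k * s) + 1 := by rw [← mul_assoc]; omega
  rw [hs, hk, hLs, Nat.add_sub_cancel, Nat.mul_div_cancel_left _ (by omega : 0 < 2 * k)]
  rw [show (2 * k + 1) / 2 = k by omega, show (2 * (k * s) + 1) / 2 = k * s by omega, mul_comm]

variable {K : Type*} [Field K] [Finite K]

theorem two_mul_card_nonzero_squares_add_one (hK : ringChar K ≠ 2) :
    2 * Nat.card {a : K | a ≠ 0 ∧ IsSquare a} + 1 = Nat.card K := by
  classical
  have := Fintype.ofFinite K
  have hχ (a : K) : quadraticChar K a =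
      2 * (if a ≠ 0 ∧ IsSquare a then 1 else 0) - (if a ≠ 0 then 1 else 0) := by
    rcases eq_or_ne a 0 with rfl | ha
    · simp
    by_cases hsq : IsSquare a
    · simp [ha, hsq, (quadraticChar_one_iff_isSquare ha).2 hsq]
    · simp [ha, hsq, quadraticChar_neg_one_iff_not_isSquare.2 hsq]
  have hsum := quadraticChar_sum_zero hK
  simp only [hχ, Finset.sum_sub_distrib, ← Finset.mul_sum, Finset.sum_boole,
    Finset.filter_ne', Finset.card_erase_of_mem (Finset.mem_univ _), Finset.card_univ] at hsum
  rw [Nat.card_eq_fintype_card, Nat.card_eq_fintype_card, Fintype.card_subtype]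
  simp only [Set.mem_ofPred_eq]
  have := Fintype.card_pos (α := K)
  omega

theorem exists_sq_add_mul_sq_eq (hK : ringChar K ≠ 2) {c : K} (hc : c ≠ 0) (x : K) :
    ∃ a b, x = a ^ 2 + c * b ^ 2 := by
  have := Fintype.ofFinite K
  obtain ⟨a, b, h⟩ := exists_root_sum_quadratic (f := X ^ 2) (g := C c * X ^ 2 - C x)
    (degree_X_pow 2) (by rw [degree_sub_C (by rw [degree_C_mul_X_pow 2 hc]; norm_num),
      degree_C_mul_X_pow 2 hc]; rfl) (odd_card_of_char_ne_two hK)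
  exact ⟨a, b, by simp at h; linear_combination -h⟩

end FiniteField

section Polynomial

variable {F : Type*} [Field F]

theorem natCard_quotient_span {g : F[X]} (hg : g ≠ 0) :
    Nat.card (F[X] ⧸ Ideal.span {g}) = Nat.card F ^ g.natDegree := by
  have := (AdjoinRoot.powerBasis hg).finite
  change Nat.card (AdjoinRoot g) = _
  rw [Module.natCard_eq_pow_finrank (K := F), (AdjoinRoot.powerBasis hg).finrank,
    AdjoinRoot.powerBasis_dim]

theorem natCard_quotient_span_pow {P : F[X]} (hP : P ≠ 0) (m : ℕ) :
    Nat.card (F[X] ⧸ Ideal.span {P ^ m}) = (Nat.card F ^ P.natDegree) ^ m := by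
  rw [← pow_mul, mul_comm, ← natDegree_pow]
  exact natCard_quotient_span (pow_ne_zero m hP)

theorem finite_quotient_span [Finite F] {g : F[X]} (hg : g ≠ 0) :
    Finite (F[X] ⧸ Ideal.span {g}) :=
  have := (AdjoinRoot.powerBasis hg).finite
  Module.finite_of_finite F (M := AdjoinRoot g)

theorem AdjoinRoot.norm_neg_root {P : F[X]} [Fact (Irreducible P)] (hP : P.Monic) :
    Algebra.norm F (-root P) = P.coeff 0 := by
  have hd := (powerBasis hP.ne_zero).finrank
  rw [powerBasis_dim] at hd
  rw [neg_eq_neg_one_mul, ← map_one (algebraMap F (AdjoinRoot P)), ← map_neg, map_mul,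
    Algebra.norm_algebraMap, hd, ← powerBasis_gen hP.ne_zero,
    Algebra.PowerBasis.norm_gen_eq_coeff_zero_minpoly, minpoly_powerBasis_gen_of_monic hP,
    powerBasis_dim, ← mul_assoc, ← mul_pow, neg_one_mul, neg_neg, one_pow, one_mul]

theorem AdjoinRoot.isSquare_neg_root_iff [Finite F] {P : F[X]} [Fact (Irreducible P)]
    (hP : P.Monic) (hF : ringChar F ≠ 2) : IsSquare (-root P) ↔ IsSquare (P.eval 0) := by
  have : Finite (AdjoinRoot P) := finite_quotient_span hP.ne_zero
  rw [← FiniteField.isSquare_norm_iff hF, norm_neg_root hP, coeff_zero_eq_eval_zero]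

variable {P : F[X]}

theorem Polynomial.Monic.eq_X_iff_eval_zero_eq_zero (hPm : P.Monic) (hP : Irreducible P) :
    P = X ↔ P.eval 0 = 0 :=
  ⟨by rintro rfl; simp, fun h => (eq_of_monic_of_associated monic_X hPm
    (irreducible_X.associated_of_dvd hP (X_dvd_iff.2 (by rwa [coeff_zero_eq_eval_zero])))).symm⟩

theorem AdjoinRoot.root_ne_zero_of_eval_ne_zero (hPm : P.Monic) (hP : Irreducible P)
    (h0 : P.eval 0 ≠ 0) : AdjoinRoot.root P ≠ 0 := by
  rw [← AdjoinRoot.mk_X, Ne, AdjoinRoot.mk_eq_zero]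
  exact fun h => h0 ((hPm.eq_X_iff_eval_zero_eq_zero hP).1
    (eq_of_monic_of_associated hPm monic_X (hP.associated_of_dvd irreducible_X h)))

theorem Polynomial.isUnit_two (hF : ringChar F ≠ 2) : IsUnit (2 : F[X]) :=
  map_ofNat (C : F →+* F[X]) 2 ▸ isUnit_C.2 (Ring.two_ne_zero hF).isUnit

end Polynomial

section Aset

variable {F : Type*} [Field F]

theorem mem_Aset_iff {g : F[X]} {x : F[X] ⧸ Ideal.span {g}} :
    x ∈ Aset F g ↔ ∃ a b, x = a ^ 2 + Ideal.Quotient.mk _ X * b ^ 2 := by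
  constructor
  · rintro ⟨A, B, rfl⟩
    exact ⟨Ideal.Quotient.mk _ A, Ideal.Quotient.mk _ B, by simp⟩
  · rintro ⟨a, b, rfl⟩
    obtain ⟨A, rfl⟩ := Ideal.Quotient.mk_surjective a
    obtain ⟨B, rfl⟩ := Ideal.Quotient.mk_surjective b
    exact ⟨A, B, by simp⟩

theorem card_Aset_one : Nat.card (Aset F 1) = 1 := by
  have : Subsingleton (F[X] ⧸ Ideal.span {(1 : F[X])}) :=
    Ideal.Quotient.subsingleton_iff.2 Ideal.span_singleton_one
  exact Nat.card_eq_one_iff_unique.2 ⟨inferInstance, ⟨0, 0, 0, by simp⟩⟩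

theorem Aset_X_pow_add_one_inter_eq_image (n : ℕ) :
    Aset F (X ^ (n + 1)) ∩ {x | quotPowToQuot X (n + 1) x = 0} =
      quotMulPow X 1 n '' Aset F (X ^ n) := by
  ext x
  constructor
  · rintro ⟨⟨A, B, rfl⟩, hx⟩
    rw [Set.mem_ofPred_eq, quotPowToQuot_mk, Ideal.Quotient.eq_zero_iff_dvd] at hx
    obtain ⟨A, rfl⟩ := prime_X.dvd_of_dvd_pow ((dvd_add_left (dvd_mul_right X _)).1 hx)
    exact ⟨_, ⟨B, A, rfl⟩, by rw [quotMulPow_mk]; ring_nf⟩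
  · rintro ⟨_, ⟨A, B, rfl⟩, rfl⟩
    refine ⟨⟨X * B, A, by rw [quotMulPow_mk]; ring_nf⟩, ?_⟩
    rw [Set.mem_ofPred_eq, quotMulPow_mk, quotPowToQuot_mk, Ideal.Quotient.eq_zero_iff_dvd]
    exact (dvd_pow_self X one_ne_zero).mul_right _

variable {P : F[X]}

theorem mem_Aset_pow_iff_of_quotPowToQuot_ne_zero (hP : Irreducible P) (hF : ringChar F ≠ 2)
    (m : ℕ) [NeZero m] {x : F[X] ⧸ Ideal.span {P ^ m}} (hx : quotPowToQuot P m x ≠ 0) :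
    x ∈ Aset F (P ^ m) ↔ quotPowToQuot P m x ∈ Aset F P := by
  obtain ⟨f, rfl⟩ := Ideal.Quotient.mk_surjective x
  rw [quotPowToQuot_mk] at hx ⊢
  constructor
  · rintro ⟨A, B, h⟩
    exact ⟨A, B, by rw [← quotPowToQuot_mk P m, h, quotPowToQuot_mk]⟩
  · rintro ⟨a, b, h⟩
    rw [Ideal.Quotient.eq, Ideal.mem_span_singleton] at h
    rw [Ne, Ideal.Quotient.eq_zero_iff_dvd] at hx
    obtain ⟨A, B, hAB⟩ := exists_sq_add_mul_sq_dvd_sub hP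
      (Polynomial.isUnit_two hF) hx (dvd_sub_comm.1 h) m
    exact ⟨A, B, by rw [Ideal.Quotient.eq, Ideal.mem_span_singleton, dvd_sub_comm]; exact hAB⟩

variable [Finite F]

theorem card_Aset_pow_mul_card (hP : Irreducible P) (hF : ringChar F ≠ 2) (m : ℕ) [NeZero m] :
    Nat.card (Aset F (P ^ m)) * Nat.card (F[X] ⧸ Ideal.span {P}) =
      Nat.card ↥(Aset F P \ {0}) * Nat.card (F[X] ⧸ Ideal.span {P ^ m}) +
      Nat.card ↥(Aset F (P ^ m) ∩ {x | quotPowToQuot P m x = 0}) *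
        Nat.card (F[X] ⧸ Ideal.span {P}) := by
  set ρ := quotPowToQuot P m
  have : Finite (F[X] ⧸ Ideal.span {P ^ m}) :=
    finite_quotient_span (pow_ne_zero m hP.ne_zero)
  have hunits : Aset F (P ^ m) \ {x | ρ x = 0} = ρ ⁻¹' (Aset F P \ {0}) := by
    ext x
    by_cases hx : ρ x = 0
    · simp [hx]
    · simp [hx, mem_Aset_pow_iff_of_quotPowToQuot_ne_zero hP hF m hx, ρ]
  have hsplit := Set.ncard_inter_add_ncard_sdiff_eq_ncard (Aset F (P ^ m)) {x | ρ x = 0}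
    (Set.toFinite _)
  have hpre := ρ.toAddMonoidHom.card_preimage_of_surjective (quotPowToQuot_surjective P m)
    (Aset F P \ {0})
  have huniv := ρ.toAddMonoidHom.card_preimage_of_surjective (quotPowToQuot_surjective P m)
    Set.univ
  rw [hunits, ← Nat.card_coe_set_eq, ← Nat.card_coe_set_eq, ← Nat.card_coe_set_eq] at hsplit
  rw [Set.preimage_univ, Nat.card_univ, Nat.card_univ] at huniv
  rw [huniv, ← hsplit]
  change Nat.card (ρ ⁻¹' _) = _ at hpre
  rw [hpre]
  ring

theorem Aset_eq_univ_of_eval_ne_zero (hPm : P.Monic) (hP : Irreducible P) (hF : ringChar F ≠ 2)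
    (h0 : P.eval 0 ≠ 0) : Aset F P = Set.univ := by
  have := Fact.mk hP
  have : Finite (AdjoinRoot P) := finite_quotient_span hP.ne_zero
  refine Set.eq_univ_of_forall fun x => mem_Aset_iff.2 ?_
  exact FiniteField.exists_sq_add_mul_sq_eq (Algebra.ringChar_eq F (AdjoinRoot P) ▸ hF)
    (AdjoinRoot.root_ne_zero_of_eval_ne_zero hPm hP h0) (x : AdjoinRoot P)

theorem Aset_pow_eq_univ_of_isSquare (hPm : P.Monic) (hP : Irreducible P) (hF : ringChar F ≠ 2)
    (h0 : P.eval 0 ≠ 0) (hsq : IsSquare (P.eval 0)) (m : ℕ) : Aset F (P ^ m) = Set.univ := by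
  have := Fact.mk hP
  obtain ⟨β, hβ⟩ := (AdjoinRoot.isSquare_neg_root_iff hPm hF).2 hsq
  obtain ⟨b, rfl⟩ := AdjoinRoot.mk_surjective β
  have hb : IsCoprime P b := by
    rw [hP.coprime_iff_not_dvd, ← AdjoinRoot.mk_eq_zero]
    rintro hb
    rw [hb, mul_zero, neg_eq_zero] at hβ
    exact AdjoinRoot.root_ne_zero_of_eval_ne_zero hPm hP h0 hβ
  have hbX : P ∣ b ^ 2 + X := by
    rw [← AdjoinRoot.mk_eq_zero, map_add, AdjoinRoot.mk_X, map_pow, sq, ← hβ, neg_add_cancel]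
  exact Set.eq_univ_of_forall fun x => mem_Aset_iff.2
    (exists_sq_add_mul_sq_eq_mk_of_isCoprime (Polynomial.isUnit_two hF) hb hbX m x)

theorem Aset_pow_add_two_inter_eq_image (hPm : P.Monic) (hP : Irreducible P)
    (hF : ringChar F ≠ 2) (hns : ¬IsSquare (P.eval 0)) (n : ℕ) :
    Aset F (P ^ (n + 2)) ∩ {x | quotPowToQuot P (n + 2) x = 0} =
      quotMulPow P 2 n '' Aset F (P ^ n) := by
  have := Fact.mk hP
  ext x
  constructor
  · rintro ⟨⟨A, B, rfl⟩, hx⟩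
    rw [Set.mem_ofPred_eq, quotPowToQuot_mk] at hx
    have hAB : AdjoinRoot.mk P (A ^ 2 + X * B ^ 2) = 0 := hx
    rw [map_add, map_mul, map_pow, map_pow, AdjoinRoot.mk_X] at hAB
    obtain ⟨hA, hB⟩ := eq_zero_of_sq_add_mul_sq_eq_zero
      (by rwa [AdjoinRoot.isSquare_neg_root_iff hPm hF]) hAB
    obtain ⟨A, rfl⟩ := AdjoinRoot.mk_eq_zero.1 hA
    obtain ⟨B, rfl⟩ := AdjoinRoot.mk_eq_zero.1 hB
    exact ⟨_, ⟨A, B, rfl⟩, by rw [quotMulPow_mk]; ring_nf⟩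
  · rintro ⟨_, ⟨A, B, rfl⟩, rfl⟩
    refine ⟨⟨P * A, P * B, by rw [quotMulPow_mk]; ring_nf⟩, ?_⟩
    rw [Set.mem_ofPred_eq, quotMulPow_mk, quotPowToQuot_mk, Ideal.Quotient.eq_zero_iff_dvd]
    exact (dvd_pow_self P two_ne_zero).mul_right _

end Aset

section Closed

variable {F : Type*} [Field F] [Finite F]

theorem card_Aset_pow_add_two_of_not_isSquare {P : F[X]} (hPm : P.Monic) (hP : Irreducible P)
    (hF : ringChar F ≠ 2) (hns : ¬IsSquare (P.eval 0)) (n : ℕ) :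
    Nat.card (Aset F (P ^ (n + 2))) + (Nat.card F ^ P.natDegree) ^ (n + 1) =
      (Nat.card F ^ P.natDegree) ^ (n + 2) + Nat.card (Aset F (P ^ n)) := by
  have h0 : P.eval 0 ≠ 0 := fun h => hns (by rw [h]; exact IsSquare.zero)
  have key := card_Aset_pow_mul_card hP hF (n + 2)
  rw [Aset_pow_add_two_inter_eq_image hPm hP hF hns n,
    Nat.card_image_of_injective (quotMulPow_injective hP.ne_zero 2 n),
    natCard_quotient_span_pow hP.ne_zero, natCard_quotient_span hP.ne_zero] at key
  have hU : Nat.card ↥(Aset F P \ {0}) + 1 = Nat.card F ^ P.natDegree := by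
    have := finite_quotient_span hP.ne_zero
    rw [Aset_eq_univ_of_eval_ne_zero hPm hP hF h0, Nat.card_coe_set_eq,
      Set.ncard_sdiff_singleton_add_one (Set.mem_univ _) Set.finite_univ, Set.ncard_univ]
    exact natCard_quotient_span hP.ne_zero
  generalize Nat.card ↥(Aset F P \ {0}) = U at *
  rw [← hU] at key ⊢
  apply Nat.eq_of_mul_eq_mul_right U.add_one_pos
  linear_combination key

theorem card_Aset_pow_mul_of_not_isSquare {P : F[X]} (hPm : P.Monic) (hP : Irreducible P)
    (hF : ringChar F ≠ 2) (hns : ¬IsSquare (P.eval 0)) (ν : ℕ) :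
    Nat.card (Aset F (P ^ ν)) * (Nat.card F ^ P.natDegree + 1) =
      (Nat.card F ^ P.natDegree) ^ (ν + 1) + if Even ν then 1 else Nat.card F ^ P.natDegree := by
  induction ν using Nat.twoStepInduction with
  | zero => rw [pow_zero, card_Aset_one]; simp
  | one =>
    have h0 : P.eval 0 ≠ 0 := fun h => hns (by rw [h]; exact IsSquare.zero)
    rw [pow_one, Aset_eq_univ_of_eval_ne_zero hPm hP hF h0, Nat.card_univ,
      natCard_quotient_span hP.ne_zero]
    simp
    ring
  | more n ih _ =>
    have hrec := card_Aset_pow_add_two_of_not_isSquare hPm hP hF hns n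
    have hpar : Even (n + 2) ↔ Even n := by simp [parity_simps]
    simp only [hpar]
    zify at hrec ih ⊢
    linear_combination ((Nat.card F : ℤ) ^ P.natDegree + 1) * hrec + ih

theorem two_mul_card_Aset_X_pow_add_one (hF : ringChar F ≠ 2) (n : ℕ) :
    2 * Nat.card (Aset F (X ^ (n + 1))) + Nat.card F ^ n =
      Nat.card F ^ (n + 1) + 2 * Nat.card (Aset F (X ^ n)) := by
  have key := card_Aset_pow_mul_card irreducible_X hF (n + 1)
  rw [Aset_X_pow_add_one_inter_eq_image n,
    Nat.card_image_of_injective (quotMulPow_injective X_ne_zero 1 n),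
    natCard_quotient_span_pow X_ne_zero, natCard_quotient_span X_ne_zero, natDegree_X,
    pow_one] at key
  have hU : 2 * Nat.card ↥(Aset F X \ {0}) + 1 = Nat.card F := by
    have hsq : Aset F X \ {0} = {a | a ≠ 0 ∧ IsSquare a} := by
      ext a
      simp only [Set.mem_sdiff, Set.mem_singleton_iff, Set.mem_ofPred_eq, mem_Aset_iff,
        Ideal.Quotient.mk_singleton_self, zero_mul, add_zero]
      constructor
      · rintro ⟨⟨r, -, rfl⟩, h⟩
        exact ⟨h, r, sq r⟩
      · rintro ⟨h, r, rfl⟩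
        exact ⟨⟨r, 0, (sq r).symm⟩, h⟩
    have := Fact.mk (irreducible_X (R := F))
    have : Finite (AdjoinRoot (X : F[X])) := finite_quotient_span X_ne_zero
    have hq : Nat.card (F[X] ⧸ Ideal.span {(X : F[X])}) = Nat.card F := by
      rw [natCard_quotient_span X_ne_zero, natDegree_X, pow_one]
    rw [hsq, ← hq]
    exact FiniteField.two_mul_card_nonzero_squares_add_one (K := AdjoinRoot (X : F[X]))
      (Algebra.ringChar_eq F (AdjoinRoot (X : F[X])) ▸ hF)
  generalize Nat.card ↥(Aset F X \ {0}) = U at *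
  rw [← hU] at key ⊢
  apply Nat.eq_of_mul_eq_mul_right (2 * U).add_one_pos
  linear_combination 2 * key

theorem two_mul_card_Aset_X_pow (hF : ringChar F ≠ 2) (ν : ℕ) :
    2 * Nat.card (Aset F (X ^ ν)) = Nat.card F ^ ν + 1 := by
  induction ν with
  | zero => rw [pow_zero, card_Aset_one, pow_zero]
  | succ n ih => linarith [two_mul_card_Aset_X_pow_add_one hF n]

end Closed

section Chi

variable {F : Type*} [Field F] [Fintype F] {P : F[X]}

theorem not_isSquare_of_chiq_eq_neg_one (h : chiq F P = -1) : ¬IsSquare (P.eval 0) := by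
  unfold chiq at h
  split_ifs at h <;> norm_num at h
  assumption

theorem eval_zero_eq_zero_of_chiq_eq_zero (h : chiq F P = 0) : P.eval 0 = 0 := by
  unfold chiq at h
  split_ifs at h <;> norm_num at h
  assumption

theorem isSquare_of_chiq_eq_one (h : chiq F P = 1) : P.eval 0 ≠ 0 ∧ IsSquare (P.eval 0) := by
  unfold chiq at h
  split_ifs at h <;> norm_num at h
  constructor <;> assumption

end Chi

theorem card_Aset_general (F : Type) [Field F] [Fintype F] (hF : Odd (Fintype.card F))
    (P : F[X]) (hPm : P.Monic) (hPi : Irreducible P) (ν : ℕ) :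
    (chiq F P = -1 →
      (Odd ν → (Nat.card ↥(Aset F (P ^ ν)) : ℝ) =
        absP F P ^ ν * (1 - 1 / (absP F P + 1)) + absP F P / (absP F P + 1)) ∧
      (Even ν → (Nat.card ↥(Aset F (P ^ ν)) : ℝ) =
        absP F P ^ ν * (1 - 1 / (absP F P + 1)) + 1 / (absP F P + 1))) ∧
    (chiq F P = 0 →
      (Nat.card ↥(Aset F (P ^ ν)) : ℝ) = (absP F P ^ ν + 1) / 2) ∧
    (chiq F P = 1 →
      (Nat.card ↥(Aset F (P ^ ν)) : ℝ) = absP F P ^ ν) := by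
  have hF2 : ringChar F ≠ 2 :=
    mt FiniteField.even_card_iff_char_two.1 (by rw [Nat.odd_iff.1 hF]; decide)
  have hQ : absP F P = ((Nat.card F ^ P.natDegree : ℕ) : ℝ) := by
    simp [absP, Nat.card_eq_fintype_card]
  have hQ1 : absP F P + 1 ≠ 0 := by rw [hQ]; positivity
  refine ⟨fun h => ?_, fun h => ?_, fun h => ?_⟩
  · have key : (Nat.card (Aset F (P ^ ν)) : ℝ) * (absP F P + 1) =
        absP F P ^ (ν + 1) + if Even ν then 1 else absP F P := by
      rw [hQ]
      exact_mod_cast card_Aset_pow_mul_of_not_isSquare hPm hPi hF2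
        (not_isSquare_of_chiq_eq_neg_one h) ν
    refine ⟨fun hodd => ?_, fun heven => ?_⟩
    · rw [if_neg (Nat.not_even_iff_odd.2 hodd)] at key
      field_simp
      linear_combination key
    · rw [if_pos heven] at key
      field_simp
      linear_combination key
  · obtain rfl := (hPm.eq_X_iff_eval_zero_eq_zero hPi).2 (eval_zero_eq_zero_of_chiq_eq_zero h)
    have key : 2 * (Nat.card (Aset F (X ^ ν)) : ℝ) = absP F X ^ ν + 1 := by
      rw [hQ, natDegree_X, pow_one]
      exact_mod_cast two_mul_card_Aset_X_pow hF2 ν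
    linarith
  · obtain ⟨h0, hsq⟩ := isSquare_of_chiq_eq_one h
    rw [Aset_pow_eq_univ_of_isSquare hPm hPi hF2 h0 hsq, Nat.card_univ,
      natCard_quotient_span_pow hPi.ne_zero, hQ]
    push_cast
    ring

/-- **Lemma (cardinality of `𝒜_q(P^ν)`).**
Let `P` be monic irreducible and `ν ≥ 1`. If `χ_q(P) = −1` then
`#𝒜_q(P^ν) = |P|^ν(1 − 1/(|P|+1)) + |P|/(|P|+1)` for `ν` odd and
`= |P|^ν(1 − 1/(|P|+1)) + 1/(|P|+1)` for `ν` even; if `χ_q(P) = 0` then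
`#𝒜_q(P^ν) = (|P|^ν + 1)/2`; if `χ_q(P) = 1` then `#𝒜_q(P^ν) = |P|^ν`. -/
theorem card_Aset (F : Type) [Field F] [Fintype F] (hF : Odd (Fintype.card F))
    (P : F[X]) (hPm : P.Monic) (hPi : Irreducible P) (ν : ℕ) (hν : 1 ≤ ν) :
    (chiq F P = -1 →
      (Odd ν → (Nat.card ↥(Aset F (P ^ ν)) : ℝ) =
        absP F P ^ ν * (1 - 1 / (absP F P + 1)) + absP F P / (absP F P + 1)) ∧
      (Even ν → (Nat.card ↥(Aset F (P ^ ν)) : ℝ) =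
        absP F P ^ ν * (1 - 1 / (absP F P + 1)) + 1 / (absP F P + 1))) ∧
    (chiq F P = 0 →
      (Nat.card ↥(Aset F (P ^ ν)) : ℝ) = (absP F P ^ ν + 1) / 2) ∧
    (chiq F P = 1 →
      (Nat.card ↥(Aset F (P ^ ν)) : ℝ) = absP F P ^ ν) :=
  card_Aset_general F hF P hPm hPi ν
end

section
/- Let n ≥ 3 and let Hₙ = V ⋊ Sₙ be the hyperoctahedral group, where V = (𝔽₂)ⁿ and Sₙ acts by permuting coordinates. Let V_{n−1} = {x ∈ V : x₁ + ⋯ + xₙ = 0} and let N = V_{n−1} ⋊ Sₙ ≤ Hₙ. Then M(Hₙ) = M(N) = V_{n−1} ⋊ Aₙ, i.e. the Melnikov subgroups of both Hₙ and N equal the subgroup {(x,τ) : x₁ + ⋯ + xₙ = 0 and τ is an even permutation}. -/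
open Equiv

open scoped Classical

noncomputable section

/-- The vector part `V = (𝔽₂)ⁿ` of the hyperoctahedral group (written
multiplicatively so that it can serve as the kernel of a semidirect product). -/
abbrev Vn (n : ℕ) : Type := Fin n → Multiplicative (ZMod 2)

/-- The permutation action of `Sₙ` on `V = (𝔽₂)ⁿ` by permuting coordinates, as a
homomorphism `Sₙ →* Aut(V)`. -/
def permHom (n : ℕ) : Perm (Fin n) →* MulAut (Vn n) where
  toFun σ := MulEquiv.arrowCongr σ (MulEquiv.refl (Multiplicative (ZMod 2)))
  map_one' := by
    ext x i
    rfl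
  map_mul' σ τ := by
    ext x i
    rfl

/-- The hyperoctahedral group `Hₙ = V ⋊ Sₙ`, `V = (𝔽₂)ⁿ`, with `Sₙ` permuting
coordinates; elements are written `⟨x, τ⟩` with `x ∈ V`, `τ ∈ Sₙ`. -/
abbrev Hyp (n : ℕ) : Type := SemidirectProduct (Vn n) (Perm (Fin n)) (permHom n)

/-- The total sign `χ : Hₙ → {±1}`, `χ(x,τ) = (−1)^{x₁+⋯+xₙ}`, realized as a
homomorphism to `Multiplicative (ZMod 2) ≅ {±1}`. -/
def tsign (n : ℕ) : Hyp n →* Multiplicative (ZMod 2) where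
  toFun g := Multiplicative.ofAdd (∑ i, Multiplicative.toAdd (g.left i))
  map_one' := by
    simp
  map_mul' g h := by
    simp only [SemidirectProduct.mul_left]
    rw [← ofAdd_add]
    congr 1
    have : ∑ i, Multiplicative.toAdd ((permHom n g.right h.left) i) =
        ∑ i, Multiplicative.toAdd (h.left i) := by
      exact Equiv.sum_comp (g.right.symm)
        (fun i => Multiplicative.toAdd (h.left i))
    simp [Pi.mul_apply, Finset.sum_add_distrib, this]

/-- The subgroup `V_{n−1} ⋊ Sₙ = ker χ` of `Hₙ` (sum of signs zero). -/
def kerSign (n : ℕ) : Subgroup (Hyp n) := (tsign n).ker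

/-- The subgroup `V_{n−1} ⋊ Aₙ` of `Hₙ`: total sign `0` and even permutation part. -/
def Kn (n : ℕ) : Subgroup (Hyp n) :=
  (tsign n).ker ⊓ (alternatingGroup (Fin n)).comap SemidirectProduct.rightHom

/-- A maximal normal subgroup: a proper normal subgroup maximal among proper normal
subgroups. -/
def IsMaximalNormal {G : Type*} [Group G] (N : Subgroup G) : Prop :=
  N.Normal ∧ N ≠ ⊤ ∧ ∀ N' : Subgroup G, N'.Normal → N < N' → N' = ⊤

/-- The Melnikov subgroup `M(G)`: the intersection of all maximal normal subgroups of
`G` (equal to `G` itself when there are none, i.e. when `G` is trivial). -/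
def melnikov (G : Type*) [Group G] : Subgroup G :=
  sInf {N : Subgroup G | IsMaximalNormal N}
end

/-!
Both `Hₙ` and `N = V_{n−1} ⋊ Sₙ` map onto `Sₙ` with abelian kernel. A maximal normal subgroup
`M` of such a group `G` either contains the kernel, and then its image is a maximal normal
subgroup of `Sₙ`, hence contains `Aₙ`; or `M` supplements the kernel, and then `G ⧸ M` is
abelian. So `M(G)` contains the preimage of `Aₙ` intersected with `[G, G]`, and
`V_{n−1} ⋊ Aₙ ≤ [N, N]` because every three-cycle is a commutator in `Sₙ` and
`⁅e_i + e_k, (i j)⁆ = e_i + e_j` for `k ∉ {i, j}`. Conversely, `V_{n−1} ⋊ Aₙ` is the intersection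
of two subgroups of index two of `Hₙ`, and has index two in `N`.
-/

open SemidirectProduct

open scoped commutatorElement

section MaximalNormal

variable {G : Type*} [Group G]

theorem melnikov_le {N : Subgroup G} (hN : IsMaximalNormal N) : melnikov G ≤ N :=
  sInf_le hN

theorem le_melnikov {K : Subgroup G} (hK : ∀ N : Subgroup G, IsMaximalNormal N → K ≤ N) :
    K ≤ melnikov G :=
  le_sInf hK

theorem isMaximalNormal_of_index_eq_two {N : Subgroup G} (hN : N.index = 2) :
    IsMaximalNormal N := by
  refine ⟨Subgroup.normal_of_index_eq_two hN, fun h => by simp [h] at hN, fun N' _ hlt => ?_⟩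
  have : N.FiniteIndex := ⟨by omega⟩
  have hdvd : N'.index ∣ 2 := hN ▸ Subgroup.index_dvd_of_le hlt.le
  have hlt2 : N'.index < 2 := hN ▸ Subgroup.index_strictAnti hlt
  have hpos : 0 < N'.index := Nat.pos_of_dvd_of_pos hdvd two_pos
  exact Subgroup.index_eq_one.mp (by omega)

namespace IsMaximalNormal

theorem sup_eq_top {M K : Subgroup G} (hM : IsMaximalNormal M) [K.Normal] (hKM : ¬K ≤ M) :
    M ⊔ K = ⊤ :=
  have := hM.1
  hM.2.2 _ (Subgroup.sup_normal M K) (lt_of_le_of_ne le_sup_left fun h => hKM (h ▸ le_sup_right))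

theorem map {H : Type*} [Group H] {M : Subgroup G} (hM : IsMaximalNormal M) (f : G →* H)
    (hf : Function.Surjective f) (hker : f.ker ≤ M) : IsMaximalNormal (M.map f) := by
  obtain ⟨hnormal, hne, hmax⟩ := hM
  have hcomap : (M.map f).comap f = M := Subgroup.comap_map_eq_self hker
  refine ⟨hnormal.map f hf, fun htop => hne (by rw [← hcomap, htop, Subgroup.comap_top]), ?_⟩
  intro K hK hlt
  have hlt' : M < K.comap f := by
    refine lt_of_le_of_ne (hcomap ▸ Subgroup.comap_mono hlt.le) fun heq => hlt.ne ?_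
    rw [heq, Subgroup.map_comap_eq_self_of_surjective hf]
  rw [← Subgroup.map_comap_eq_self_of_surjective hf K, hmax _ (hK.comap f) hlt',
    Subgroup.map_top_of_surjective f hf]

end IsMaximalNormal

theorem commutator_le_of_sup_eq_top {M A : Subgroup G} [M.Normal] (hsup : M ⊔ A = ⊤)
    (hA : ∀ a ∈ A, ∀ b ∈ A, a * b = b * a) : commutator G ≤ M := by
  have hmk : ∀ q : G ⧸ M, ∃ a ∈ A, (a : G ⧸ M) = q := by
    intro q
    obtain ⟨g, rfl⟩ := QuotientGroup.mk_surjective q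
    obtain ⟨m, hm, a, ha, rfl⟩ := Subgroup.mem_sup_of_normal_left.mp (hsup ▸ Subgroup.mem_top g)
    refine ⟨a, ha, ?_⟩
    rw [QuotientGroup.mk_mul, (QuotientGroup.eq_one_iff m).mpr hm, one_mul]
  rw [← Subgroup.Normal.quotient_commutative_iff_commutator_le]
  refine ⟨⟨fun q r => ?_⟩⟩
  obtain ⟨a, ha, rfl⟩ := hmk q
  obtain ⟨b, hb, rfl⟩ := hmk r
  rw [← QuotientGroup.mk_mul, ← QuotientGroup.mk_mul, hA a ha b hb]

end MaximalNormal

section Perm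

variable {α : Type*} [Fintype α] [DecidableEq α]

theorem alternatingGroup_le_of_isThreeCycle_mem {K : Subgroup (Perm α)} [K.Normal]
    {c : Perm α} (hc : c.IsThreeCycle) (hcK : c ∈ K) : alternatingGroup α ≤ K := by
  rw [← Equiv.Perm.closure_three_cycles_eq_alternating, Subgroup.closure_le]
  intro d hd
  obtain ⟨z, rfl⟩ := isConj_iff.mp (Equiv.Perm.isConj_iff_cycleType_eq.mpr (hc.trans hd.symm))
  exact ‹K.Normal›.conj_mem c hcK z

theorem alternatingGroup_le_commutator : alternatingGroup α ≤ commutator (Perm α) := by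
  rw [← Equiv.Perm.closure_three_cycles_eq_alternating, Subgroup.closure_le, commutator_eq_closure]
  intro c hc
  refine Subgroup.subset_closure (mem_commutatorSet_of_isConj_sq _ ?_)
  rw [Equiv.Perm.isConj_iff_cycleType_eq, sq, hc.isThreeCycle_sq, hc]

theorem alternatingGroup_ne_top [Nontrivial α] : alternatingGroup α ≠ ⊤ := fun h => by
  simpa [h] using (alternatingGroup.index_eq_two (α := α))

end Perm

theorem exists_isThreeCycle_commutator_swap {n : ℕ} (hn3 : 3 ≤ n) (hn4 : n ≤ 4)
    {w : Perm (Fin n)} (hw : Perm.sign w = -1) :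
    ∃ a c : Fin n, (⁅swap a c, w⁆ : Perm (Fin n)).IsThreeCycle := by
  simp only [← card_support_eq_three_iff]
  interval_cases n
  · revert w hw; decide
  · revert w hw; decide

theorem alternatingGroup_le_of_isMaximalNormal {n : ℕ} (hn : 3 ≤ n)
    {K : Subgroup (Perm (Fin n))} (hK : IsMaximalNormal K) : alternatingGroup (Fin n) ≤ K := by
  have := hK.1
  have : Nontrivial (Fin n) := Fin.nontrivial_iff_two_le.mpr (by omega)
  rcases le_or_gt 5 n with h5 | h4
  · refine Equiv.Perm.alternatingGroup_le_of_normal (by simpa using h5) ?_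
    rw [Subgroup.nontrivial_iff_ne_bot]
    rintro rfl
    have : Nontrivial (alternatingGroup (Fin n)) :=
      alternatingGroup.nontrivial_of_three_le_card (by simpa using hn)
    exact alternatingGroup_ne_top (hK.2.2 _ inferInstance
      (bot_lt_iff_ne_bot.mpr ((Subgroup.nontrivial_iff_ne_bot _).mp this)))
  · by_contra hAK
    have hKA : ¬K ≤ alternatingGroup (Fin n) := fun h =>
      alternatingGroup_ne_top (by rw [← hK.sup_eq_top hAK, sup_eq_right.mpr h])
    obtain ⟨w, hwK, hwA⟩ := SetLike.not_le_iff_exists.mp hKA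
    have hw : Perm.sign w = -1 := (Int.units_eq_one_or _).resolve_left hwA
    obtain ⟨a, c, hc⟩ := exists_isThreeCycle_commutator_swap hn (by omega) hw
    refine hAK (alternatingGroup_le_of_isThreeCycle_mem hc ?_)
    exact K.mul_mem (hK.1.conj_mem w hwK _) (K.inv_mem hwK)

theorem comap_alternatingGroup_inf_commutator_le_melnikov {G : Type*} [Group G] {n : ℕ}
    (hn : 3 ≤ n) (π : G →* Perm (Fin n)) (hπ : Function.Surjective π)
    (hker : ∀ a ∈ π.ker, ∀ b ∈ π.ker, a * b = b * a) :
    (alternatingGroup (Fin n)).comap π ⊓ commutator G ≤ melnikov G := by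
  refine le_melnikov fun M hM => ?_
  have := hM.1
  by_cases hkerM : π.ker ≤ M
  · have h := Subgroup.comap_mono (f := π)
      (alternatingGroup_le_of_isMaximalNormal hn (hM.map π hπ hkerM))
    rw [Subgroup.comap_map_eq_self hkerM] at h
    exact inf_le_left.trans h
  · exact inf_le_right.trans (commutator_le_of_sup_eq_top (hM.sup_eq_top hkerM) hker)

theorem index_comap_alternatingGroup {G α : Type*} [Group G] [Fintype α] [DecidableEq α]
    [Nontrivial α] {π : G →* Perm α} (hπ : Function.Surjective π) :
    ((alternatingGroup α).comap π).index = 2 := by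
  rw [Subgroup.index_comap_of_surjective _ hπ, alternatingGroup.index_eq_two]

theorem SemidirectProduct.mul_comm_of_mem_ker_rightHom {N G : Type*} [CommGroup N] [Group G]
    {φ : G →* MulAut N} {a b : N ⋊[φ] G} (ha : a ∈ rightHom.ker) (hb : b ∈ rightHom.ker) :
    a * b = b * a := by
  rw [← range_inl_eq_ker_rightHom] at ha hb
  obtain ⟨x, rfl⟩ := ha
  obtain ⟨y, rfl⟩ := hb
  rw [← map_mul, ← map_mul, mul_comm]

theorem prod_mulSingle_mul_mulSingle_inv {ι M : Type*} [Fintype ι] [DecidableEq ι] [CommGroup M]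
    {x : ι → M} (hx : ∏ i, x i = 1) (j : ι) :
    ∏ i, Pi.mulSingle i (x i) * Pi.mulSingle j (x i)⁻¹ = x := by
  have hj : ∏ i, (Pi.mulSingle j (x i)⁻¹ : ι → M) = Pi.mulSingle j (∏ i, x i)⁻¹ := by
    rw [← Finset.prod_inv_distrib]
    exact (map_prod (MonoidHom.mulSingle (fun _ : ι => M) j) _ _).symm
  rw [Finset.prod_mul_distrib, Finset.univ_prod_mulSingle, hj, hx, inv_one, Pi.mulSingle_one,
    mul_one]

theorem SemidirectProduct.commutatorElement_inl_inr {N G : Type*} [Group N] [Group G]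
    {φ : G →* MulAut N} (y : N) (g : G) :
    ⁅(inl y : N ⋊[φ] G), (inr g : N ⋊[φ] G)⁆ = inl (y * φ g y⁻¹) := by
  rw [map_mul, inl_aut, commutatorElement_def, map_inv, map_inv]
  group

section Hyperoctahedral

variable {n : ℕ}

theorem tsign_apply (g : Hyp n) : tsign n g = ∏ i, g.left i := by
  simp [tsign, ofAdd_sum]

theorem tsign_inl_mulSingle (i : Fin n) (u : Multiplicative (ZMod 2)) :
    tsign n (inl (Pi.mulSingle i u)) = u := by
  simp [tsign_apply]

theorem tsign_inr (σ : Perm (Fin n)) : tsign n (inr σ) = 1 := by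
  simp [tsign_apply]

theorem permHom_mulSingle (σ : Perm (Fin n)) (i : Fin n) (u : Multiplicative (ZMod 2)) :
    permHom n σ (Pi.mulSingle i u) = Pi.mulSingle (σ i) u :=
  Pi.mulSingle_comp_equiv σ.symm i u

theorem commutatorElement_inl_mulSingle_inr_swap {i j k : Fin n} (hik : i ≠ k) (hjk : j ≠ k)
    (u : Multiplicative (ZMod 2)) :
    ⁅(inl (Pi.mulSingle i u * Pi.mulSingle k u⁻¹ : Vn n) : Hyp n), (inr (swap i j) : Hyp n)⁆ =
      inl (Pi.mulSingle i u * Pi.mulSingle j u⁻¹ : Vn n) := by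
  rw [SemidirectProduct.commutatorElement_inl_inr, mul_inv, map_mul (permHom n (swap i j)),
    map_inv, map_inv, permHom_mulSingle, permHom_mulSingle, swap_apply_left,
    swap_apply_of_ne_of_ne hik.symm hjk.symm, mul_mul_mul_comm, mul_inv_cancel, mul_one,
    Pi.mulSingle_inv]

theorem inl_mem_commutator_kerSign (hn : 3 ≤ n) {x : Vn n} (hx : ∏ i, x i = 1) :
    inl x ∈ ⁅kerSign n, kerSign n⁆ := by
  let i₀ : Fin n := ⟨0, by omega⟩
  suffices h : x ∈ ⁅kerSign n, kerSign n⁆.comap inl from h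
  rw [← prod_mulSingle_mul_mulSingle_inv hx i₀]
  refine Subgroup.prod_mem _ fun i _ => ?_
  obtain ⟨k, hki, hk₀⟩ := Fin.exists_ne_and_ne_of_two_lt i i₀ (by omega)
  rw [Subgroup.mem_comap, ← commutatorElement_inl_mulSingle_inr_swap hki.symm hk₀.symm]
  refine Subgroup.commutator_mem_commutator ?_ (tsign_inr _)
  change tsign n _ = 1
  rw [map_mul, map_mul, tsign_inl_mulSingle, tsign_inl_mulSingle, mul_inv_cancel]

theorem inr_mem_commutator_kerSign {σ : Perm (Fin n)} (hσ : σ ∈ alternatingGroup (Fin n)) :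
    inr σ ∈ ⁅kerSign n, kerSign n⁆ := by
  have h : (commutator (Perm (Fin n))).map inr ≤ ⁅kerSign n, kerSign n⁆ := by
    rw [commutator_def, Subgroup.map_commutator]
    exact Subgroup.commutator_mono
      (Subgroup.map_le_iff_le_comap.mpr fun τ _ => tsign_inr τ)
      (Subgroup.map_le_iff_le_comap.mpr fun τ _ => tsign_inr τ)
  exact h (Subgroup.mem_map_of_mem _ (alternatingGroup_le_commutator hσ))

theorem kn_le_commutator_kerSign (hn : 3 ≤ n) : Kn n ≤ ⁅kerSign n, kerSign n⁆ := by
  rintro g ⟨hsign, halt⟩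
  rw [← inl_left_mul_inr_right g]
  refine Subgroup.mul_mem _ (inl_mem_commutator_kerSign hn ?_) (inr_mem_commutator_kerSign halt)
  rw [← tsign_apply]
  exact hsign

theorem index_kerSign (hn : 0 < n) : (kerSign n).index = 2 := by
  have hsurj : Function.Surjective (tsign n) := fun u =>
    ⟨inl (Pi.mulSingle ⟨0, hn⟩ u), tsign_inl_mulSingle _ u⟩
  rw [kerSign, Subgroup.index_ker, MonoidHom.range_eq_top.mpr hsurj, Subgroup.card_top]
  simp

theorem melnikov_hyp (hn : 3 ≤ n) : melnikov (Hyp n) = Kn n := by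
  have : Nontrivial (Fin n) := Fin.nontrivial_iff_two_le.mpr (by omega)
  refine le_antisymm (le_inf ?_ ?_) ?_
  · exact melnikov_le (isMaximalNormal_of_index_eq_two (index_kerSign (by omega)))
  · exact melnikov_le (isMaximalNormal_of_index_eq_two
      (index_comap_alternatingGroup rightHom_surjective))
  · refine le_trans ?_ (comap_alternatingGroup_inf_commutator_le_melnikov hn rightHom
      rightHom_surjective fun a ha b hb => mul_comm_of_mem_ker_rightHom ha hb)
    refine le_inf inf_le_right ((kn_le_commutator_kerSign hn).trans ?_)
    exact commutator_def (Hyp n) ▸ Subgroup.commutator_mono le_top le_top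

theorem map_subtype_melnikov_kerSign (hn : 3 ≤ n) :
    (melnikov (kerSign n)).map (kerSign n).subtype = Kn n := by
  have : Nontrivial (Fin n) := Fin.nontrivial_iff_two_le.mpr (by omega)
  set π : kerSign n →* Perm (Fin n) := rightHom.comp (kerSign n).subtype
  have hπ : Function.Surjective π := fun σ =>
    ⟨⟨inr σ, tsign_inr σ⟩, rightHom_inr (φ := permHom n) σ⟩
  have hmap : ((alternatingGroup (Fin n)).comap π).map (kerSign n).subtype = Kn n := by
    rw [← Subgroup.comap_comap, Subgroup.map_comap_eq, Subgroup.range_subtype]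
    rfl
  have hcomm : (alternatingGroup (Fin n)).comap π ≤ commutator (kerSign n) := by
    rw [← Subgroup.map_le_map_iff_of_injective (kerSign n).subtype_injective, hmap,
      Subgroup.map_subtype_commutator]
    exact kn_le_commutator_kerSign hn
  rw [← hmap]
  refine congrArg _ (le_antisymm ?_ ?_)
  · exact melnikov_le (isMaximalNormal_of_index_eq_two (index_comap_alternatingGroup hπ))
  · exact le_trans (le_inf le_rfl hcomm) (comap_alternatingGroup_inf_commutator_le_melnikov hn
      π hπ fun a ha b hb => Subtype.ext (mul_comm_of_mem_ker_rightHom ha hb))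

end Hyperoctahedral

/-- **Lemma (Melnikov subgroup of the hyperoctahedral group).**
For `n ≥ 3`, `M(Hₙ) = M(V_{n−1} ⋊ Sₙ) = V_{n−1} ⋊ Aₙ`, where `V_{n−1} ⋊ Sₙ = ker χ`
is viewed both as a group in its own right (for its Melnikov subgroup, pushed forward
to `Hₙ`) and as a subgroup of `Hₙ`. -/
theorem melnikov_hyperoctahedral (n : ℕ) (hn : 3 ≤ n) :
    melnikov (Hyp n) = Kn n ∧
      Subgroup.map (kerSign n).subtype (melnikov ↥(kerSign n)) = Kn n :=
  ⟨melnikov_hyp hn, map_subtype_melnikov_kerSign hn⟩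
end
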